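/- Let c and c' be lists in List ℕ of the same length n, let q < n, and suppose c and c' agree on their last q entries, whose common sum is S with S ≤ B for a budget B : ℕ. Suppose the entry of c at index n − q − 1 is at most B − S, while the entry of c' at index n − q − 1 is strictly greater than B − S. Then the greatest fitting suffix length of c under budget B is at least q + 1, while the greatest fitting suffix length of c' under budget B is exactly q. Hence the two instances, which differ only in the cost of the boundary item, have different maximal retained suffixes. -/
import Mathlib


lemma sum_drop_anti (l : List ℕ) {a b : ℕ} (hab : a ≤ b) :
    (l.drop b).sum ≤ (l.drop a).sum := by
  have h : l.drop b = (l.drop a).drop (b - a) := by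
    rw [List.drop_drop]; congr 1; omega
  rw [h]
  exact List.Sublist.sum_le_sum (List.drop_sublist _ _) (fun x _ => Nat.zero_le x)

/-- The greatest `k ≤ c.length` such that the suffix of length `k` fits
budget `B`, i.e. `(c.drop (c.length - k)).sum ≤ B`. -/
def kstar (c : List ℕ) (B : ℕ) : ℕ :=
  Nat.findGreatest (fun k => (c.drop (c.length - k)).sum ≤ B) c.length

/-- Budget lower bound instance: two histories agreeing on their last `q`
entries (of common sum `S ≤ B`) but whose boundary item at index `n - q - 1`
respectively fits (`≤ B - S`) or does not fit (`> B - S`) the remaining budget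
have different maximal retained suffix lengths: at least `q + 1` for the first
and exactly `q` for the second. -/
theorem boundary_item_distinguishes (c c' : List ℕ) (B q : ℕ)
    (hlen : c'.length = c.length)
    (hq : q < c.length)
    (hagree : c.drop (c.length - q) = c'.drop (c.length - q))
    (hS : (c.drop (c.length - q)).sum ≤ B)
    (hc : c.get ⟨c.length - q - 1, by omega⟩ ≤ B - (c.drop (c.length - q)).sum)
    (hc' : c'.get ⟨c.length - q - 1, by omega⟩ > B - (c.drop (c.length - q)).sum) :
    q + 1 ≤ kstar c B ∧ kstar c' B = q := by
  have hidx : c.length - q - 1 < c.length := by omega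
  have hidx' : c.length - q - 1 < c'.length := by omega
  have hcons : c.drop (c.length - q - 1)
      = c.get ⟨c.length - q - 1, hidx⟩ :: c.drop (c.length - q) := by
    rw [List.drop_eq_getElem_cons hidx,
      show c.length - q - 1 + 1 = c.length - q from by omega]
    simp
  have hcons' : c'.drop (c.length - q - 1)
      = c'.get ⟨c.length - q - 1, hidx'⟩ :: c'.drop (c.length - q) := by
    rw [List.drop_eq_getElem_cons hidx',
      show c.length - q - 1 + 1 = c.length - q from by omega]
    simp
  constructor
  · apply Nat.le_findGreatest (by omega)
    have h1 : c.length - (q + 1) = c.length - q - 1 := by omega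
    rw [h1, hcons, List.sum_cons]
    omega
  · rw [kstar, hlen]
    rw [Nat.findGreatest_eq_iff]
    refine ⟨by omega, fun _ => ?_, fun k hk1 hk2 => ?_⟩
    · rw [← hagree]; exact hS
    · simp only [not_le]
      have h1 : (c'.drop (c.length - q - 1)).sum ≤ (c'.drop (c.length - k)).sum :=
        sum_drop_anti _ (by omega)
      rw [hcons', List.sum_cons, ← hagree] at h1
      omega
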